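/- For any HT-trace M = ⟨H,T⟩ of length λ, any dynamic formula φ, and any time point k < λ: if M,k ⊨ φ then ⟨T,T⟩,k ⊨ φ (persistence property of DHT). -/

import Mathlib

open Classical

mutual
inductive Formula (A : Type) : Type
  | atom : A → Formula A
  | bot : Formula A
  | top : Formula A
  | box : PExp A → Formula A → Formula A
  | dia : PExp A → Formula A → Formula A
inductive PExp (A : Type) : Type
  | step : PExp A
  | test : Formula A → PExp A
  | plus : PExp A → PExp A → PExp A
  | seq : PExp A → PExp A → PExp A
  | star : PExp A → PExp A
  | conv : PExp A → PExp A
end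

/-- An HT-trace of length `len` (possibly infinite, `len = ⊤`). -/
structure HTTrace (A : Type) where
  len : ℕ∞
  H : ℕ → Set A
  T : ℕ → Set A
  sub : ∀ i, H i ⊆ T i

/-- The total trace ⟨T,T⟩ associated with M = ⟨H,T⟩. -/
def HTTrace.total {A : Type} (M : HTTrace A) : HTTrace A :=
  ⟨M.len, M.T, M.T, fun _ => le_refl _⟩

mutual
/-- DHT satisfaction M,k ⊨ φ. -/
def sat {A : Type} (M : HTTrace A) (k : ℕ) : Formula A → Prop
  | .atom a => a ∈ M.H k
  | .bot => False
  | .top => True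
  | .dia ρ φ => ∃ i, rel M ρ k i ∧ sat M i φ
  | .box ρ φ => (∀ i, rel M ρ k i → sat M i φ) ∧
                (∀ i, rel M.total ρ k i → sat M.total i φ)
/-- DHT accessibility relation ‖ρ‖_M. -/
def rel {A : Type} (M : HTTrace A) : PExp A → ℕ → ℕ → Prop
  | .step, k, i => i = k + 1 ∧ ((i : ℕ∞) < M.len)
  | .test φ, k, i => i = k ∧ sat M k φ
  | .plus ρ₁ ρ₂, k, i => rel M ρ₁ k i ∨ rel M ρ₂ k i
  | .seq ρ₁ ρ₂, k, i => ∃ j, rel M ρ₁ k j ∧ rel M ρ₂ j i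
  | .star ρ, k, i => Relation.ReflTransGen (fun a b => rel M ρ a b) k i
  | .conv ρ, k, i => rel M ρ i k
end

/-
Induction on formulas and path expressions together. Atoms persist because `H ⊆ T`; diamonds and
the relations of path expressions are built monotonically from satisfaction (tests are the only
place where formulas enter a relation). A box needs no induction: its second conjunct already
evaluates the box on `⟨T,T⟩`, which is its own total trace.
-/

mutual
theorem sat_total_of_sat {A : Type} (M : HTTrace A) (k : ℕ) :
    (φ : Formula A) → sat M k φ → sat M.total k φ
  | .atom _, h => M.sub k h
  | .bot, h => h
  | .top, h => h
  | .dia ρ ψ, ⟨i, hρ, hψ⟩ => ⟨i, rel_total_of_rel M ρ k i hρ, sat_total_of_sat M i ψ hψ⟩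
  | .box _ _, h => ⟨h.2, h.2⟩

theorem rel_total_of_rel {A : Type} (M : HTTrace A) :
    (ρ : PExp A) → (k i : ℕ) → rel M ρ k i → rel M.total ρ k i
  | .step, _, _, h => h
  | .test φ, k, _, ⟨hik, hφ⟩ => ⟨hik, sat_total_of_sat M k φ hφ⟩
  | .plus ρ₁ ρ₂, k, i, h => h.imp (rel_total_of_rel M ρ₁ k i) (rel_total_of_rel M ρ₂ k i)
  | .seq ρ₁ ρ₂, k, i, ⟨j, h₁, h₂⟩ =>
    ⟨j, rel_total_of_rel M ρ₁ k j h₁, rel_total_of_rel M ρ₂ j i h₂⟩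
  | .star ρ, k, i, h => Relation.ReflTransGen.mono (rel_total_of_rel M ρ) k i h
  | .conv ρ, k, i, h => rel_total_of_rel M ρ i k h
end

/-- Persistence: if M,k ⊨ φ then ⟨T,T⟩,k ⊨ φ. -/
theorem stmt0 {A : Type} (M : HTTrace A) (φ : Formula A) (k : ℕ)
    (hk : (k : ℕ∞) < M.len) (h : sat M k φ) : sat M.total k φ :=
  sat_total_of_sat M k φ h
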